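/- Let α ∈ (0,1), θ > -α. If Y_j ∼ Beta(1-α, θ+jα) then E[(jY_j)^α] = 1/(α^α Γ(1-α)) + O(1/j) and Var((jY_j)^α) = (Γ(1+α)Γ(1-α) - 1)/(α^{2α} Γ(1-α)^2) + O(1/j) as j → ∞. -/

import Mathlib

open MeasureTheory ProbabilityTheory Filter Topology

/-- The Beta(a,b) distribution on `ℝ`, supported on `(0,1)`, with density
`Γ(a+b)/(Γ(a)Γ(b)) x^{a-1}(1-x)^{b-1}`. -/
noncomputable def betaMeasure (a b : ℝ) : Measure ℝ :=
  (MeasureTheory.volume.restrict (Set.Ioo (0:ℝ) 1)).withDensity fun x =>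
    ENNReal.ofReal (Real.Gamma (a + b) / (Real.Gamma a * Real.Gamma b) *
      x ^ (a - 1) * (1 - x) ^ (b - 1))

/-- `(Y j)_{j ≥ 1}` are independent with `Y j ∼ Beta(1-α, θ+jα)` (the stick-breaking
variables of the `PD(α,θ)` distribution). -/
def IsStickBreaking {Ω : Type*} [MeasureSpace Ω] (α θ : ℝ) (Y : ℕ → Ω → ℝ) : Prop :=
  (∀ j, Measurable (Y j)) ∧
    iIndepFun Y ℙ ∧
      ∀ j : ℕ, 1 ≤ j → Measure.map (Y j) ℙ = _root_.betaMeasure (1 - α) (θ + j * α)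

/-- `M n = ∏_{i=1}^n (1 - Y i)` (so `M 0 = 1`). -/
noncomputable def Mstick {Ω : Type*} (Y : ℕ → Ω → ℝ) (n : ℕ) (ω : Ω) : ℝ :=
  ∏ i ∈ Finset.Icc 1 n, (1 - Y i ω)

/-! The Beta moments give `E[(jY_j)^r] = Γ(1-α+r) / (α^r Γ(1-α)) · x^r Γ(x+a) / Γ(x+a+r)` at
`x = jα`, `a = 1 + θ - α`. Log-convexity of `Γ` yields Wendel's inequality `1 ≤ x^s Γ(x) / Γ(x+s) ≤ 1 + s/x` for
`0 ≤ s ≤ 1`, so this Gamma ratio is `1 + O(1/x)` for every `r ≥ 0` (for `r > 1` peel off unit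
steps). Both the mean (`r = α`) and the variance `E[X²] - E[X]²` (`r = 2α` and `r = α`) are
therefore their limits up to `O(1/j)`; the bound holds eventually, and the finitely many remaining
`j` are absorbed into the constant. -/

open Asymptotics Real Set

namespace Real

theorem Gamma_add_le_rpow_mul_Gamma {x s : ℝ} (hx : 0 < x) (hs0 : 0 ≤ s) (hs1 : s ≤ 1) :
    Gamma (x + s) ≤ x ^ s * Gamma x := by
  have hΓx := Gamma_pos_of_pos hx
  have hconv := convexOn_log_Gamma.2 (mem_Ioi.2 hx) (mem_Ioi.2 (by linarith : 0 < x + 1))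
    (sub_nonneg.2 hs1) hs0 (sub_add_cancel 1 s)
  simp only [Function.comp_apply, smul_eq_mul, Gamma_add_one hx.ne', log_mul hx.ne' hΓx.ne',
    show (1 - s) * x + s * (x + 1) = x + s by ring] at hconv
  rw [← log_le_log_iff (Gamma_pos_of_pos (by linarith)) (by positivity),
    log_mul (by positivity) hΓx.ne', log_rpow hx]
  linarith

theorem one_le_rpow_mul_Gamma_div_Gamma_add {x s : ℝ} (hx : 0 < x) (hs0 : 0 ≤ s) (hs1 : s ≤ 1) :
    1 ≤ x ^ s * Gamma x / Gamma (x + s) := by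
  rw [one_le_div (Gamma_pos_of_pos (by linarith))]
  exact Gamma_add_le_rpow_mul_Gamma hx hs0 hs1

theorem rpow_mul_Gamma_div_Gamma_add_le {x s : ℝ} (hx : 0 < x) (hs0 : 0 ≤ s) (hs1 : s ≤ 1) :
    x ^ s * Gamma x / Gamma (x + s) ≤ 1 + s / x := by
  have hxs : 0 < x + s := by linarith
  -- Wendel's bound at `x + s` with exponent `1 - s` reaches `Γ (x + 1) = x Γ x`.
  have h := Gamma_add_le_rpow_mul_Gamma hxs (sub_nonneg.2 hs1) (by linarith : 1 - s ≤ 1)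
  rw [add_add_sub_cancel, Gamma_add_one hx.ne'] at h
  have hq : 1 ≤ (x + s) / x := (one_le_div hx).2 (by linarith)
  calc x ^ s * Gamma x / Gamma (x + s)
      ≤ x ^ s * ((x + s) ^ (1 - s) * Gamma (x + s) / x) / Gamma (x + s) := by
        gcongr; rwa [le_div_iff₀' hx]
    _ = ((x + s) / x) ^ (1 - s) := by
        rw [div_rpow hxs.le hx.le, rpow_sub hx, rpow_one]
        field_simp [(Gamma_pos_of_pos hxs).ne']
    _ ≤ (x + s) / x := rpow_le_self_of_one_le hq (by linarith)
    _ = 1 + s / x := by field_simp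

theorem abs_rpow_sub_one_le_abs_sub_one {t s : ℝ} (ht : 0 < t) (hs0 : 0 ≤ s) (hs1 : s ≤ 1) :
    |t ^ s - 1| ≤ |t - 1| := by
  rcases le_total t 1 with h | h
  · have := rpow_le_rpow_of_exponent_ge ht h hs1
    rw [rpow_one] at this
    rw [abs_of_nonpos (sub_nonpos.2 (rpow_le_one ht.le h hs0)), abs_of_nonpos (sub_nonpos.2 h)]
    linarith
  · have := rpow_le_rpow_of_exponent_le h hs1
    rw [rpow_one] at this
    rw [abs_of_nonneg (sub_nonneg.2 (one_le_rpow h hs0)), abs_of_nonneg (sub_nonneg.2 h)]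
    linarith

end Real

theorem Asymptotics.IsBigO.mul_sub_one {α : Type*} {l : Filter α} {f g h : α → ℝ}
    (hf : (fun x => f x - 1) =O[l] h) (hg : (fun x => g x - 1) =O[l] h)
    (hh : h =O[l] fun _ => (1 : ℝ)) : (fun x => f x * g x - 1) =O[l] h := by
  have hfg : (fun x => (f x - 1) * (g x - 1)) =O[l] h := by
    simpa using hf.mul (hg.trans hh)
  exact ((hfg.add hf).add hg).congr_left fun x => by ring

theorem isBigO_inv_add_const (a : ℝ) : (fun x : ℝ => (x + a)⁻¹) =O[atTop] fun x => x⁻¹ := by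
  refine IsBigO.of_bound 2 ?_
  filter_upwards [eventually_ge_atTop (2 * |a| + 1)] with x hx
  have hxa : x / 2 ≤ x + a := by linarith [neg_abs_le a, abs_nonneg a]
  have hx0 : 0 < x / 2 := by linarith [abs_nonneg a]
  rw [norm_inv, norm_inv, norm_of_nonneg (by linarith), norm_of_nonneg (by linarith)]
  calc (x + a)⁻¹ ≤ (x / 2)⁻¹ := inv_anti₀ hx0 hxa
    _ = 2 * x⁻¹ := by rw [inv_div, div_eq_mul_inv]

noncomputable def gammaRatio (s a x : ℝ) : ℝ := x ^ s * Gamma (x + a) / Gamma (x + a + s)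

theorem gammaRatio_add {s t a x : ℝ} (hx : 0 < x) (h : Gamma (x + a + s) ≠ 0) :
    gammaRatio (s + t) a x = gammaRatio s a x * gammaRatio t (a + s) x := by
  rw [add_assoc] at h
  rw [gammaRatio, gammaRatio, gammaRatio, rpow_add hx, ← add_assoc, add_assoc x a s]
  field_simp

theorem isBigO_gammaRatio_sub_one_of_le_one {s : ℝ} (hs0 : 0 ≤ s) (hs1 : s ≤ 1) (a : ℝ) :
    (fun x => gammaRatio s a x - 1) =O[atTop] fun x => x⁻¹ := by
  have hpos : ∀ᶠ x in atTop, 0 < x ∧ 0 < x + a :=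
    (eventually_gt_atTop 0).and
      (tendsto_atTop_add_const_right _ a tendsto_id |>.eventually_gt_atTop 0)
  have hW : (fun x => (x + a) ^ s * Gamma (x + a) / Gamma (x + a + s) - 1)
      =O[atTop] fun x => x⁻¹ := by
    refine (IsBigO.of_bound s ?_).trans (isBigO_inv_add_const a)
    filter_upwards [hpos] with x ⟨_, hxa⟩
    rw [norm_inv, norm_of_nonneg hxa.le, ← div_eq_mul_inv, norm_eq_abs, abs_le]
    constructor
    · linarith [one_le_rpow_mul_Gamma_div_Gamma_add hxa hs0 hs1, div_nonneg hs0 hxa.le]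
    · linarith [rpow_mul_Gamma_div_Gamma_add_le hxa hs0 hs1]
  have hq : (fun x => (x / (x + a)) ^ s - 1) =O[atTop] fun x => x⁻¹ := by
    refine (IsBigO.of_bound |a| ?_).trans (isBigO_inv_add_const a)
    filter_upwards [hpos] with x ⟨hx, hxa⟩
    have : x / (x + a) - 1 = -a * (x + a)⁻¹ := by field_simp; ring
    rw [norm_eq_abs, norm_eq_abs, ← abs_mul, ← abs_neg (a * _), ← neg_mul, ← this]
    exact abs_rpow_sub_one_le_abs_sub_one (by positivity) hs0 hs1
  refine (hq.mul_sub_one hW (tendsto_inv_atTop_zero.isBigO_one ℝ)).congr' ?_ EventuallyEq.rfl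
  filter_upwards [hpos] with x ⟨hx, hxa⟩
  rw [gammaRatio, div_rpow hx.le hxa.le]
  field_simp [(rpow_pos_of_pos hxa s).ne']

theorem isBigO_gammaRatio_sub_one {s : ℝ} (hs : 0 ≤ s) (a : ℝ) :
    (fun x => gammaRatio s a x - 1) =O[atTop] fun x => x⁻¹ := by
  obtain ⟨n, hn⟩ := exists_nat_ge s
  induction n generalizing s a with
  | zero => exact isBigO_gammaRatio_sub_one_of_le_one hs (by simp at hn; linarith) a
  | succ n ih =>
    rcases le_total s 1 with hs1 | hs1
    · exact isBigO_gammaRatio_sub_one_of_le_one hs hs1 a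
    have hrest := ih (sub_nonneg.2 hs1) (a + 1) (by push_cast at hn; linarith)
    refine ((isBigO_gammaRatio_sub_one_of_le_one zero_le_one le_rfl a).mul_sub_one hrest
      (tendsto_inv_atTop_zero.isBigO_one ℝ)).congr' ?_ EventuallyEq.rfl
    filter_upwards [eventually_gt_atTop 0, eventually_gt_atTop (-a - 1)] with x hx hxa
    rw [← gammaRatio_add hx (Gamma_pos_of_pos (by linarith)).ne', add_sub_cancel]

theorem isBigO_gammaRatio_natCast_mul_sub_one {s c : ℝ} (hs : 0 ≤ s) (a : ℝ) (hc : 0 < c) :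
    (fun n : ℕ => gammaRatio s a (n * c) - 1) =O[atTop] fun n => (n : ℝ)⁻¹ :=
  ((isBigO_gammaRatio_sub_one hs a).comp_tendsto
    (tendsto_natCast_atTop_atTop.atTop_mul_const hc)).trans
    ((isBigO_const_mul_self c⁻¹ _ _).congr_left fun n => by simp [mul_comm])

theorem exists_abs_le_div_of_isBigO_inv {f : ℕ → ℝ} (hf : f =O[atTop] fun n => (n : ℝ)⁻¹) :
    ∃ C, ∀ n, 1 ≤ n → |f n| ≤ C / n := by
  have hshift : (fun n => f (n + 1)) =O[cofinite] fun n => ((n + 1 : ℕ) : ℝ)⁻¹ := by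
    rw [Nat.cofinite_eq_atTop]
    exact hf.comp_tendsto (tendsto_add_atTop_nat 1)
  obtain ⟨C, hC⟩ := (isBigO_cofinite_iff fun n h => absurd h (by positivity)).1 hshift
  refine ⟨C, fun n hn => ?_⟩
  obtain ⟨m, rfl⟩ := Nat.exists_eq_add_of_le' hn
  simpa [div_eq_mul_inv, abs_of_pos (m.cast_add_one_pos : (0 : ℝ) < m + 1)] using hC m

theorem integral_Ioo_rpow_mul_one_sub_rpow {u v : ℝ} (hu : 0 < u) (hv : 0 < v) :
    ∫ x in Ioo (0 : ℝ) 1, x ^ (u - 1) * (1 - x) ^ (v - 1) =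
      Gamma u * Gamma v / Gamma (u + v) := by
  have h : ((∫ x in Ioo (0 : ℝ) 1, x ^ (u - 1) * (1 - x) ^ (v - 1) : ℝ) : ℂ) =
      Complex.betaIntegral u v := by
    rw [Complex.betaIntegral, intervalIntegral.integral_of_le zero_le_one,
      integral_Ioc_eq_integral_Ioo, ← integral_complex_ofReal]
    refine setIntegral_congr_fun measurableSet_Ioo fun x hx => ?_
    push_cast
    rw [Complex.ofReal_cpow hx.1.le, Complex.ofReal_cpow (sub_nonneg.2 hx.2.le)]
    push_cast
    ring
  rw [Complex.betaIntegral_eq_Gamma_mul_div _ _ (by simpa) (by simpa), ← Complex.ofReal_add,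
    Complex.Gamma_ofReal, Complex.Gamma_ofReal, Complex.Gamma_ofReal] at h
  exact_mod_cast h

theorem betaMeasure_compl_Ioo (a b : ℝ) : _root_.betaMeasure a b (Ioo 0 1)ᶜ = 0 :=
  withDensity_absolutelyContinuous _ _ (by simp [Measure.restrict_apply measurableSet_Ioo.compl])

theorem ae_mem_Ioo_betaMeasure (a b : ℝ) : ∀ᵐ x ∂_root_.betaMeasure a b, x ∈ Ioo (0 : ℝ) 1 :=
  measure_eq_zero_iff_ae_notMem.1 (betaMeasure_compl_Ioo a b) |>.mono fun _ hx => not_not.1 hx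

theorem integral_betaMeasure {a b : ℝ} (ha : 0 < a) (hb : 0 < b) (g : ℝ → ℝ) :
    ∫ x, g x ∂_root_.betaMeasure a b = ∫ x in Ioo (0 : ℝ) 1,
      Gamma (a + b) / (Gamma a * Gamma b) * x ^ (a - 1) * (1 - x) ^ (b - 1) * g x := by
  have hC : 0 ≤ Gamma (a + b) / (Gamma a * Gamma b) := by
    have := Gamma_pos_of_pos ha; have := Gamma_pos_of_pos hb
    have := Gamma_pos_of_pos (add_pos ha hb); positivity
  rw [_root_.betaMeasure, integral_withDensity_eq_integral_toReal_smul (by fun_prop)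
    (ae_of_all _ fun _ => ENNReal.ofReal_lt_top)]
  refine setIntegral_congr_fun measurableSet_Ioo fun x hx => ?_
  have := rpow_nonneg hx.1.le (a - 1); have := rpow_nonneg (sub_nonneg.2 hx.2.le) (b - 1)
  rw [ENNReal.toReal_ofReal (by positivity), smul_eq_mul]

theorem integral_rpow_betaMeasure {a b r : ℝ} (ha : 0 < a) (hb : 0 < b) (hr : 0 < a + r) :
    ∫ x, x ^ r ∂_root_.betaMeasure a b =
      Gamma (a + r) * Gamma (a + b) / (Gamma a * Gamma (a + b + r)) := by
  rw [integral_betaMeasure ha hb]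
  have hint : ∫ x in Ioo (0 : ℝ) 1,
      Gamma (a + b) / (Gamma a * Gamma b) * x ^ (a - 1) * (1 - x) ^ (b - 1) * x ^ r =
      ∫ x in Ioo (0 : ℝ) 1,
        Gamma (a + b) / (Gamma a * Gamma b) * (x ^ (a + r - 1) * (1 - x) ^ (b - 1)) := by
    refine setIntegral_congr_fun measurableSet_Ioo fun x hx => ?_
    rw [show a + r - 1 = a - 1 + r by ring, rpow_add hx.1]
    ring
  rw [hint, integral_const_mul, integral_Ioo_rpow_mul_one_sub_rpow hr hb,
    show a + r + b = a + b + r by ring]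
  have := (Gamma_pos_of_pos hb).ne'
  field_simp

section Law

variable {Ω : Type*} [MeasurableSpace Ω] {μ : Measure Ω} {Y : Ω → ℝ} {a b : ℝ}

theorem ae_mem_Ioo_of_map_eq_betaMeasure (hY : Measurable Y)
    (hlaw : μ.map Y = _root_.betaMeasure a b) :
    ∀ᵐ ω ∂μ, Y ω ∈ Ioo (0 : ℝ) 1 :=
  ae_of_ae_map hY.aemeasurable (hlaw ▸ ae_mem_Ioo_betaMeasure a b)

theorem integral_mul_rpow_of_map_eq_betaMeasure (hY : Measurable Y)
    (hlaw : μ.map Y = _root_.betaMeasure a b) (ha : 0 < a) (hb : 0 < b) {k r : ℝ} (hk : 0 ≤ k)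
    (hr : 0 < a + r) :
    ∫ ω, (k * Y ω) ^ r ∂μ =
      k ^ r * (Gamma (a + r) * Gamma (a + b) / (Gamma a * Gamma (a + b + r))) := by
  rw [← integral_rpow_betaMeasure ha hb hr, ← integral_const_mul, ← hlaw,
    integral_map hY.aemeasurable (by fun_prop)]
  refine integral_congr_ae ((ae_mem_Ioo_of_map_eq_betaMeasure hY hlaw).mono fun ω hω => ?_)
  exact mul_rpow hk hω.1.le

theorem variance_mul_rpow_of_map_eq_betaMeasure [IsProbabilityMeasure μ] (hY : Measurable Y)
    (hlaw : μ.map Y = _root_.betaMeasure a b) {k r : ℝ} (hk : 0 ≤ k) (hr : 0 ≤ r) :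
    variance (fun ω => (k * Y ω) ^ r) μ =
      ∫ ω, (k * Y ω) ^ (2 * r) ∂μ - (∫ ω, (k * Y ω) ^ r ∂μ) ^ 2 := by
  have hY01 := ae_mem_Ioo_of_map_eq_betaMeasure hY hlaw
  have hbdd : ∀ᵐ ω ∂μ, ‖(k * Y ω) ^ r‖ ≤ k ^ r := hY01.mono fun ω hω => by
    have : 0 ≤ k * Y ω := mul_nonneg hk hω.1.le
    rw [norm_of_nonneg (rpow_nonneg this r)]
    exact rpow_le_rpow this (mul_le_of_le_one_right hk hω.2.le) hr
  rw [variance_eq_sub (MemLp.of_bound (by fun_prop) _ hbdd)]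
  congr 1
  refine integral_congr_ae (hY01.mono fun ω hω => ?_)
  simp only [Pi.pow_apply]
  rw [mul_comm 2 r, rpow_mul (mul_nonneg hk hω.1.le), rpow_two]

end Law

section StickBreaking

variable {Ω : Type*} [MeasureSpace Ω] {α θ : ℝ} {Y : ℕ → Ω → ℝ}

theorem IsStickBreaking.integral_rpow_eq_gammaRatio (hα : α ∈ Ioo 0 1)
    (hY : IsStickBreaking α θ Y) {j : ℕ} (hj : 1 ≤ j) (hb : 0 < θ + j * α) {r : ℝ}
    (hr : 0 < 1 - α + r) :
    ∫ ω, ((j : ℝ) * Y j ω) ^ r ∂ℙ =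
      Gamma (1 - α + r) / (α ^ r * Gamma (1 - α)) * gammaRatio r (1 + θ - α) (j * α) := by
  have ha : 0 < 1 - α := sub_pos.2 hα.2
  rw [integral_mul_rpow_of_map_eq_betaMeasure (hY.1 j) (hY.2.2 j hj) ha hb (Nat.cast_nonneg j) hr,
    gammaRatio, mul_rpow (Nat.cast_nonneg j) hα.1.le,
    show 1 - α + (θ + j * α) = j * α + (1 + θ - α) by ring]
  have := (Gamma_pos_of_pos ha).ne'
  have := (rpow_pos_of_pos hα.1 r).ne'
  field_simp

theorem eventually_one_le_and_pos_add_mul (hα : 0 < α) (θ : ℝ) :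
    ∀ᶠ j : ℕ in atTop, 1 ≤ j ∧ 0 < θ + j * α :=
  (eventually_ge_atTop 1).and <|
    (tendsto_natCast_atTop_atTop.atTop_mul_const hα).eventually_gt_atTop (-θ) |>.mono
      fun _ h => by linarith

theorem IsStickBreaking.isBigO_integral_rpow_sub (hα : α ∈ Ioo 0 1)
    (hY : IsStickBreaking α θ Y) :
    (fun j : ℕ => ∫ ω, ((j : ℝ) * Y j ω) ^ α ∂ℙ - 1 / (α ^ α * Gamma (1 - α)))
      =O[atTop] fun j => (j : ℝ)⁻¹ := by
  refine ((isBigO_gammaRatio_natCast_mul_sub_one hα.1.le (1 + θ - α) hα.1).const_mul_left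
    (1 / (α ^ α * Gamma (1 - α)))).congr' ?_ EventuallyEq.rfl
  filter_upwards [eventually_one_le_and_pos_add_mul hα.1 θ] with j ⟨hj, hb⟩
  rw [hY.integral_rpow_eq_gammaRatio hα hj hb (by linarith), sub_add_cancel, Gamma_one]
  ring

theorem IsStickBreaking.isBigO_variance_rpow_sub [IsProbabilityMeasure (ℙ : Measure Ω)]
    (hα : α ∈ Ioo 0 1) (hY : IsStickBreaking α θ Y) :
    (fun j : ℕ => variance (fun ω => ((j : ℝ) * Y j ω) ^ α) ℙ -
        (Gamma (1 + α) * Gamma (1 - α) - 1) / (α ^ (2 * α) * Gamma (1 - α) ^ 2))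
      =O[atTop] fun j => (j : ℝ)⁻¹ := by
  set A := 1 / (α ^ α * Gamma (1 - α))
  set B := Gamma (1 + α) / (α ^ (2 * α) * Gamma (1 - α))
  have hinv : (fun j : ℕ => (j : ℝ)⁻¹) =O[atTop] fun _ => (1 : ℝ) :=
    (tendsto_inv_atTop_zero.comp tendsto_natCast_atTop_atTop).isBigO_one ℝ
  have h₁ := isBigO_gammaRatio_natCast_mul_sub_one hα.1.le (1 + θ - α) hα.1
  have h₂ := isBigO_gammaRatio_natCast_mul_sub_one (by linarith [hα.1] : 0 ≤ 2 * α)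
    (1 + θ - α) hα.1
  refine ((h₂.const_mul_left B).sub ((h₁.mul_sub_one h₁ hinv).const_mul_left (A ^ 2))).congr'
    ?_ EventuallyEq.rfl
  filter_upwards [eventually_one_le_and_pos_add_mul hα.1 θ] with j ⟨hj, hb⟩
  rw [variance_mul_rpow_of_map_eq_betaMeasure (hY.1 j) (hY.2.2 j hj) (Nat.cast_nonneg j) hα.1.le,
    hY.integral_rpow_eq_gammaRatio hα hj hb (by linarith [hα.1, hα.2]),
    hY.integral_rpow_eq_gammaRatio hα hj hb (by linarith), sub_add_cancel, Gamma_one,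
    show 1 - α + 2 * α = 1 + α by ring]
  have hsq : α ^ (2 * α) = (α ^ α) ^ 2 := by rw [mul_comm, rpow_mul hα.1.le, rpow_two]
  have := (Gamma_pos_of_pos (sub_pos.2 hα.2)).ne'
  have := (rpow_pos_of_pos hα.1 α).ne'
  simp only [A, B, hsq]
  field_simp
  ring

end StickBreaking

theorem stmt6_general {Ω : Type*} [MeasureSpace Ω] [IsProbabilityMeasure (ℙ : Measure Ω)]
    (α θ : ℝ) (hα : α ∈ Set.Ioo (0:ℝ) 1)
    (Y : ℕ → Ω → ℝ) (hY : IsStickBreaking α θ Y) :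
    ∃ C : ℝ, ∀ j : ℕ, 1 ≤ j →
      |(∫ ω, ((j : ℝ) * Y j ω) ^ α ∂ℙ) - 1 / (α ^ α * Real.Gamma (1 - α))| ≤ C / j ∧
      |variance (fun ω => ((j : ℝ) * Y j ω) ^ α) ℙ -
          (Real.Gamma (1 + α) * Real.Gamma (1 - α) - 1) /
            (α ^ (2 * α) * Real.Gamma (1 - α) ^ 2)| ≤ C / j := by
  obtain ⟨C₁, h₁⟩ := exists_abs_le_div_of_isBigO_inv (hY.isBigO_integral_rpow_sub hα)
  obtain ⟨C₂, h₂⟩ := exists_abs_le_div_of_isBigO_inv (hY.isBigO_variance_rpow_sub hα)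
  refine ⟨max C₁ C₂, fun j hj => ⟨(h₁ j hj).trans ?_, (h₂ j hj).trans ?_⟩⟩ <;> gcongr
  exacts [le_max_left _ _, le_max_right _ _]

/-- `E[(jY_j)^α] = 1/(α^α Γ(1-α)) + O(1/j)` and
`Var((jY_j)^α) = (Γ(1+α)Γ(1-α) - 1)/(α^{2α} Γ(1-α)^2) + O(1/j)` as `j → ∞`. -/
theorem stmt6 {Ω : Type*} [MeasureSpace Ω] [IsProbabilityMeasure (ℙ : Measure Ω)]
    (α θ : ℝ) (hα : α ∈ Set.Ioo (0:ℝ) 1) (hθ : -α < θ)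
    (Y : ℕ → Ω → ℝ) (hY : IsStickBreaking α θ Y) :
    ∃ C : ℝ, ∀ j : ℕ, 1 ≤ j →
      |(∫ ω, ((j : ℝ) * Y j ω) ^ α ∂ℙ) - 1 / (α ^ α * Real.Gamma (1 - α))| ≤ C / j ∧
      |variance (fun ω => ((j : ℝ) * Y j ω) ^ α) ℙ -
          (Real.Gamma (1 + α) * Real.Gamma (1 - α) - 1) /
            (α ^ (2 * α) * Real.Gamma (1 - α) ^ 2)| ≤ C / j :=
  stmt6_general α θ hα Y hY
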